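/- For every (m,n) ∈ ZMod d × ZMod d, the phase-point operator A(m,n) = (1/d) Σ_{k,j ∈ ZMod d} ω^{km−jn} D(k,j)† is Hermitian: A(m,n)† = A(m,n). -/

import Mathlib

open Matrix Complex

noncomputable section

/-- `ω = exp(2πi/d)`, a primitive `d`-th root of unity. -/
def omega (d : ℕ) : ℂ := Complex.exp (2 * Real.pi * Complex.I / d)

/-- Powers of `ω` with exponent valued in `ZMod d`, evaluated via the canonical
integer representative (well-defined since `ω ^ d = 1`). -/
def wpow (d : ℕ) (x : ZMod d) : ℂ := omega d ^ x.val

/-- The clock matrix `Z`, acting as `Z e_n = ω^n e_n`. -/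
def clockZ (d : ℕ) : Matrix (ZMod d) (ZMod d) ℂ :=
  Matrix.diagonal (fun n => wpow d n)

/-- The shift matrix `X`, acting as `X e_n = e_{n+1}`. -/
def shiftX (d : ℕ) : Matrix (ZMod d) (ZMod d) ℂ :=
  Matrix.of (fun i j => if i = j + 1 then 1 else 0)

/-- The displacement operator `D(k,j) = ω^{-2⁻¹ k j} Z^k X^j`. -/
def Dop (d : ℕ) [NeZero d] (k j : ZMod d) : Matrix (ZMod d) (ZMod d) ℂ :=
  wpow d (-(2⁻¹ * k * j)) • (clockZ d ^ k.val * shiftX d ^ j.val)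

/-- The phase-point operators `A(m,n) = (1/d) Σ_{k,j} ω^{km−jn} D(k,j)†`. -/
def phasePoint (d : ℕ) [NeZero d] (m n : ZMod d) : Matrix (ZMod d) (ZMod d) ℂ :=
  (1 / (d : ℂ)) • ∑ k : ZMod d, ∑ j : ZMod d, wpow d (k * m - j * n) • (Dop d k j)ᴴ

lemma omega_pow_d (d : ℕ) [NeZero d] : omega d ^ d = 1 := by
  have hd : (d:ℂ) ≠ 0 := Nat.cast_ne_zero.2 (NeZero.ne d)
  rw [omega, ← Complex.exp_nat_mul]
  have : (d:ℂ) * (2 * Real.pi * Complex.I / d) = 2 * Real.pi * Complex.I := by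
    field_simp
  rw [this, Complex.exp_two_pi_mul_I]

lemma omega_pow_mod (d : ℕ) [NeZero d] (a : ℕ) : omega d ^ a = omega d ^ (a % d) := by
  conv_lhs => rw [← Nat.mod_add_div a d]
  rw [pow_add, pow_mul, omega_pow_d, one_pow, mul_one]

lemma wpow_add (d : ℕ) [NeZero d] (x y : ZMod d) :
    wpow d (x + y) = wpow d x * wpow d y := by
  rw [wpow, wpow, wpow, ZMod.val_add, ← omega_pow_mod, pow_add]

lemma wpow_mul_val (d : ℕ) [NeZero d] (x y : ZMod d) :
    wpow d (x * y) = wpow d x ^ y.val := by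
  rw [wpow, wpow, ZMod.val_mul, ← omega_pow_mod, pow_mul]

lemma wpow_zero (d : ℕ) [NeZero d] : wpow d 0 = 1 := by
  simp [wpow]

lemma conj_wpow (d : ℕ) [NeZero d] (x : ZMod d) :
    (starRingEnd ℂ) (wpow d x) = wpow d (-x) := by
  have h1 : wpow d x * wpow d (-x) = 1 := by
    rw [← wpow_add]; simp [wpow_zero]
  have habs : ‖omega d‖ = 1 := by
    rw [omega, Complex.norm_exp]
    norm_num [Complex.div_re]
  have h2 : wpow d x * (starRingEnd ℂ) (wpow d x) = 1 := by
    rw [Complex.mul_conj, Complex.normSq_eq_norm_sq, wpow, norm_pow, habs, one_pow, one_pow]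
    norm_num
  calc (starRingEnd ℂ) (wpow d x) = (wpow d x)⁻¹ := eq_inv_of_mul_eq_one_right h2
    _ = wpow d (-x) := (eq_inv_of_mul_eq_one_right h1).symm

lemma shiftX_pow (d : ℕ) [NeZero d] (t : ℕ) :
    shiftX d ^ t = Matrix.of (fun i j => if i = j + (t : ZMod d) then 1 else 0) := by
  induction t with
  | zero => ext i j; simp [Matrix.one_apply]
  | succ t ih =>
    rw [pow_succ, ih]
    ext i j
    rw [Matrix.mul_apply]
    rw [Finset.sum_eq_single (j + 1)]
    · simp only [Matrix.of_apply, shiftX, if_pos rfl, mul_one]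
      push_cast
      have h : j + 1 + (t : ZMod d) = j + ((t : ZMod d) + 1) := by ring
      rw [h, mul_one]
    · intro b _ hb
      simp only [Matrix.of_apply, shiftX, if_neg hb, mul_zero]
    · intro h; exact absurd (Finset.mem_univ _) h

lemma Dop_apply (d : ℕ) [NeZero d] (k j a b : ZMod d) :
    Dop d k j a b = if a = b + j then wpow d (-(2⁻¹ * k * j) + a * k) else 0 := by
  rw [Dop, Matrix.smul_apply, clockZ, Matrix.diagonal_pow, shiftX_pow,
    Matrix.diagonal_mul]
  have hv : ((j.val : ZMod d)) = j := by rw [ZMod.natCast_val, ZMod.cast_id]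
  simp only [Matrix.of_apply, hv, smul_eq_mul, mul_ite, mul_one, mul_zero, Pi.pow_apply]
  rw [wpow_add, wpow_mul_val]

lemma two_mul_inv (d : ℕ) [NeZero d] (hd : Nat.Prime d) (hodd : Odd d) :
    (2 : ZMod d) * 2⁻¹ = 1 := by
  haveI : Fact (Nat.Prime d) := ⟨hd⟩
  have h2 : (2 : ZMod d) ≠ 0 := by
    intro h
    have : (d : ℕ) ∣ 2 := by
      have := (ZMod.natCast_eq_zero_iff 2 d).mp (by exact_mod_cast h)
      exact this
    have hd2 : d = 2 := (Nat.prime_dvd_prime_iff_eq hd Nat.prime_two).mp this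
    rw [hd2] at hodd
    exact (by norm_num : ¬ Odd 2) hodd
  exact mul_inv_cancel₀ h2

lemma Dop_conjTranspose (d : ℕ) [NeZero d] (hd : Nat.Prime d) (hodd : Odd d)
    (k j : ZMod d) : (Dop d k j)ᴴ = Dop d (-k) (-j) := by
  have h2 := two_mul_inv d hd hodd
  ext a b
  rw [Matrix.conjTranspose_apply, Dop_apply, Dop_apply]
  have hiff : b = a + j ↔ a = b + -j := by constructor <;> intro h <;> simp [h]
  by_cases h : b = a + j
  · rw [if_pos h, if_pos (hiff.mp h), Complex.star_def, conj_wpow]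
    congr 1
    subst h
    linear_combination (k * j) * h2
  · rw [if_neg h, if_neg (fun hc => h (hiff.mpr hc)), star_zero]

theorem phasePoint_hermitian
    (d : ℕ) [NeZero d] (hd : Nat.Prime d) (hodd : Odd d) (m n : ZMod d) :
    (phasePoint d m n)ᴴ = phasePoint d m n := by
  rw [phasePoint, Matrix.conjTranspose_smul]
  congr 1
  · simp [Complex.star_def]
  calc (∑ k : ZMod d, ∑ j : ZMod d, wpow d (k * m - j * n) • (Dop d k j)ᴴ)ᴴ
      = ∑ k : ZMod d, ∑ j : ZMod d, wpow d (-(k * m - j * n)) • Dop d k j := by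
        rw [Matrix.conjTranspose_sum]
        refine Finset.sum_congr rfl fun k _ => ?_
        rw [Matrix.conjTranspose_sum]
        refine Finset.sum_congr rfl fun j _ => ?_
        rw [Matrix.conjTranspose_smul, Matrix.conjTranspose_conjTranspose,
          Complex.star_def, conj_wpow]
    _ = ∑ k : ZMod d, ∑ j : ZMod d, wpow d (k * m - j * n) • Dop d (-k) (-j) := by
        refine Fintype.sum_equiv (Equiv.neg (ZMod d)) _ _ fun k => ?_
        refine Fintype.sum_equiv (Equiv.neg (ZMod d)) _ _ fun j => ?_
        simp only [Equiv.neg_apply, neg_neg]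
        congr 1
        ring
    _ = ∑ k : ZMod d, ∑ j : ZMod d, wpow d (k * m - j * n) • (Dop d k j)ᴴ := by
        refine Finset.sum_congr rfl fun k _ => Finset.sum_congr rfl fun j _ => ?_
        rw [Dop_conjTranspose d hd hodd]
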